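/- Let a < b be real numbers and let u, v, w : [a,b] → ℝ satisfy: u is nonnegative and Lebesgue integrable on [a,b]; v is absolutely continuous on [a,b], i.e. there is a Lebesgue integrable function v' on [a,b] with v(t) = v(a) + ∫_a^t v'(s) ds for all t ∈ [a,b]; w is continuous on [a,b]; and w(t) ≤ v(t) + ∫_a^t u(s)·w(s) ds for all t ∈ [a,b]. Then for every t ∈ [a,b], w(t) ≤ v(a)·exp(∫_a^t u(s) ds) + ∫_a^t exp(∫_s^t u(r) dr)·v'(s) ds. -/

import Mathlib

/-!
Put `H t = v a + ∫ s in a..t, (v' s + u s * w s)`. Then `w ≤ H` on `[a, b]`, and `H` is absolutely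
continuous with `H' = v' + u w ≤ v' + u H` a.e. because `u ≥ 0`. With `U t = ∫ s in a..t, u s`,
the absolutely continuous function `exp (-U) * H` has derivative at most `exp (-U) * v'` a.e., and
integrating this from `a` to `t` bounds `H t`, hence `w t`.
-/

open MeasureTheory Set intervalIntegral

theorem LipschitzOnWith.comp_absolutelyContinuousOnInterval {X Y : Type*} [PseudoMetricSpace X]
    [PseudoMetricSpace Y] {g : X → Y} {f : ℝ → X} {K : NNReal} {s : Set X} {a b : ℝ}
    (hg : LipschitzOnWith K g s) (hf : AbsolutelyContinuousOnInterval f a b)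
    (hfs : MapsTo f (uIcc a b) s) :
    AbsolutelyContinuousOnInterval (g ∘ f) a b := by
  unfold AbsolutelyContinuousOnInterval at hf ⊢
  refine squeeze_zero' ?_ ?_ (by simpa using hf.const_mul (K : ℝ))
  · exact Filter.Eventually.of_forall fun _ ↦ Finset.sum_nonneg fun _ _ ↦ dist_nonneg
  rw [Filter.eventually_inf_principal]
  filter_upwards with ⟨n, I⟩ hnI
  rw [Finset.mul_sum]
  gcongr with i hi
  exact hg.dist_le_mul _ (hfs (hnI.1 i hi).1) _ (hfs (hnI.1 i hi).2)

theorem ContDiff.comp_absolutelyContinuousOnInterval {E : Type*} [NormedAddCommGroup E]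
    [NormedSpace ℝ E] {g : ℝ → E} {f : ℝ → ℝ} {a b : ℝ}
    (hg : ContDiff ℝ 1 g) (hf : AbsolutelyContinuousOnInterval f a b) :
    AbsolutelyContinuousOnInterval (g ∘ f) a b := by
  have hcpt := isCompact_uIcc.image_of_continuousOn hf.continuousOn
  obtain ⟨m, hm⟩ := hcpt.bddBelow
  obtain ⟨M, hM⟩ := hcpt.bddAbove
  obtain ⟨K, hK⟩ := hg.contDiffOn.exists_lipschitzOnWith one_ne_zero (convex_Icc m M)
    isCompact_Icc
  exact hK.comp_absolutelyContinuousOnInterval hf fun x hx ↦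
    ⟨hm (mem_image_of_mem f hx), hM (mem_image_of_mem f hx)⟩

theorem AbsolutelyContinuousOnInterval.sub_le_integral_of_ae_deriv_le {f g : ℝ → ℝ} {a b : ℝ}
    (hab : a ≤ b) (hf : AbsolutelyContinuousOnInterval f a b)
    (hg : IntervalIntegrable g volume a b) (hfg : ∀ᵐ x, x ∈ Icc a b → deriv f x ≤ g x) :
    f b - f a ≤ ∫ x in a..b, g x := by
  rw [← hf.integral_deriv_eq_sub]
  exact integral_mono_ae_restrict hab hf.intervalIntegrable_deriv hg <|
    (ae_restrict_iff' measurableSet_Icc).2 hfg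

theorem AbsolutelyContinuousOnInterval.le_exp_mul_add_integral {H U g : ℝ → ℝ} {a b : ℝ}
    (hab : a ≤ b) (hH : AbsolutelyContinuousOnInterval H a b)
    (hU : AbsolutelyContinuousOnInterval U a b) (hg : IntervalIntegrable g volume a b)
    (hHU : ∀ᵐ x, x ∈ Icc a b → deriv H x ≤ deriv U x * H x + g x) :
    H b ≤ Real.exp (U b - U a) * H a + ∫ x in a..b, Real.exp (U b - U x) * g x := by
  have hE : AbsolutelyContinuousOnInterval (fun x ↦ Real.exp (-U x)) a b :=
    Real.contDiff_exp.comp_absolutelyContinuousOnInterval hU.neg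
  have hEg : IntervalIntegrable (fun x ↦ Real.exp (-U x) * g x) volume a b :=
    hg.continuousOn_mul hE.continuousOn
  have hderiv : ∀ᵐ x, x ∈ Icc a b → deriv (fun x ↦ Real.exp (-U x) * H x) x ≤
      Real.exp (-U x) * g x := by
    rw [← uIcc_of_le hab]
    filter_upwards [hH.ae_differentiableAt, hU.ae_differentiableAt, hHU] with x hHx hUx hx hmem
    have hd : HasDerivAt (fun x ↦ Real.exp (-U x) * H x)
        (Real.exp (-U x) * -deriv U x * H x + Real.exp (-U x) * deriv H x) x :=
      (hUx hmem).hasDerivAt.neg.exp.mul (hHx hmem).hasDerivAt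
    rw [hd.deriv]
    have := mul_le_mul_of_nonneg_left (hx (uIcc_of_le hab ▸ hmem)) (Real.exp_pos (-U x)).le
    linarith
  have hmono := (hE.fun_mul hH).sub_le_integral_of_ae_deriv_le hab hEg hderiv
  have hint : ∫ x in a..b, Real.exp (U b - U x) * g x =
      Real.exp (U b) * ∫ x in a..b, Real.exp (-U x) * g x := by
    rw [← intervalIntegral.integral_const_mul]
    congr with x
    rw [sub_eq_add_neg, Real.exp_add, mul_assoc]
  have hb : Real.exp (U b) * Real.exp (-U b) = 1 := by
    rw [← Real.exp_add, add_neg_cancel, Real.exp_zero]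
  have ha : Real.exp (U b) * Real.exp (-U a) = Real.exp (U b - U a) := by
    rw [← Real.exp_add, sub_eq_add_neg]
  calc H b = Real.exp (U b - U a) * H a +
        Real.exp (U b) * (Real.exp (-U b) * H b - Real.exp (-U a) * H a) := by
        rw [mul_sub, ← mul_assoc, ← mul_assoc, hb, ha]; ring
    _ ≤ _ := by rw [hint]; gcongr

theorem gronwall_type_inequality_general
    (a b : ℝ) (u v w v' : ℝ → ℝ)
    (hu_nonneg : ∀ t ∈ Icc a b, 0 ≤ u t)
    (hu_int : IntegrableOn u (Icc a b))
    (hv'_int : IntegrableOn v' (Icc a b))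
    (hv_ac : ∀ t ∈ Icc a b, v t = v a + ∫ s in a..t, v' s)
    (hw_cont : ContinuousOn w (Icc a b))
    (hineq : ∀ t ∈ Icc a b, w t ≤ v t + ∫ s in a..t, u s * w s) :
    ∀ t ∈ Icc a b,
      w t ≤ v a * Real.exp (∫ s in a..t, u s)
            + ∫ s in a..t, Real.exp (∫ r in s..t, u r) * v' s := by
  intro t ht
  have hsub : uIcc a t ⊆ Icc a b := uIcc_of_le ht.1 ▸ Icc_subset_Icc_right ht.2
  have hu : IntervalIntegrable u volume a t := (hu_int.mono_set hsub).intervalIntegrable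
  have hv' : IntervalIntegrable v' volume a t := (hv'_int.mono_set hsub).intervalIntegrable
  have huw : IntervalIntegrable (fun s ↦ u s * w s) volume a t :=
    ((hu_int.mul_continuousOn hw_cont isCompact_Icc).mono_set hsub).intervalIntegrable
  set U := fun x ↦ ∫ s in a..x, u s
  set H := fun x ↦ v a + ∫ s in a..x, (v' s + u s * w s)
  have hU : AbsolutelyContinuousOnInterval U a t :=
    hu.absolutelyContinuousOnInterval_intervalIntegral left_mem_uIcc
  have hH : AbsolutelyContinuousOnInterval H a t :=
    (LipschitzWith.const (v a)).lipschitzOnWith.absolutelyContinuousOnInterval.fun_add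
      ((hv'.add huw).absolutelyContinuousOnInterval_intervalIntegral left_mem_uIcc)
  have hwH : ∀ x ∈ uIcc a t, w x ≤ H x := fun x hx ↦ by
    have hint := integral_add (hv'.mono_set (uIcc_subset_uIcc_left hx))
      (huw.mono_set (uIcc_subset_uIcc_left hx))
    have := hineq x (hsub hx)
    rw [hv_ac x (hsub hx)] at this
    simp only [H, hint]
    linarith
  have hderiv : ∀ᵐ x, x ∈ Icc a t → deriv H x ≤ deriv U x * H x + v' x := by
    rw [← uIcc_of_le ht.1]
    filter_upwards [hu.ae_hasDerivAt_integral, (hv'.add huw).ae_hasDerivAt_integral]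
      with x hUx hIx hx
    rw [(hUx hx a left_mem_uIcc).deriv, ((hIx hx a left_mem_uIcc).const_add (v a)).deriv]
    have := mul_le_mul_of_nonneg_left (hwH x hx) (hu_nonneg x (hsub hx))
    linarith
  calc w t ≤ H t := hwH t right_mem_uIcc
    _ ≤ Real.exp (U t - U a) * H a + ∫ x in a..t, Real.exp (U t - U x) * v' x :=
      hH.le_exp_mul_add_integral ht.1 hU hv' hderiv
    _ = _ := by
      simp only [U, H, integral_same, sub_zero, add_zero]
      rw [mul_comm]
      congr 1
      refine integral_congr fun x hx ↦ ?_
      rw [integral_interval_sub_left hu (hu.mono_set (uIcc_subset_uIcc_left hx))]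

/-- Generalized Gronwall-type integral inequality (Lemma 2.16). -/
theorem gronwall_type_inequality
    (a b : ℝ) (hab : a < b) (u v w v' : ℝ → ℝ)
    (hu_nonneg : ∀ t ∈ Icc a b, 0 ≤ u t)
    (hu_int : IntegrableOn u (Icc a b))
    (hv'_int : IntegrableOn v' (Icc a b))
    (hv_ac : ∀ t ∈ Icc a b, v t = v a + ∫ s in a..t, v' s)
    (hw_cont : ContinuousOn w (Icc a b))
    (hineq : ∀ t ∈ Icc a b, w t ≤ v t + ∫ s in a..t, u s * w s) :
    ∀ t ∈ Icc a b,
      w t ≤ v a * Real.exp (∫ s in a..t, u s)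
            + ∫ s in a..t, Real.exp (∫ r in s..t, u r) * v' s :=
  gronwall_type_inequality_general a b u v w v' hu_nonneg hu_int hv'_int hv_ac hw_cont hineq
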